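/- arXiv:2305.17717 — 7 statements merged into one kernel-verified Lean document; each statement's English description precedes it below -/
import Mathlib

section
/- Let $V_1, V_2, W$ be finite sets with $|V_1| \ge |V_2|$, and let $F_1 : W \to V_1$ and $F_2 : W \to V_2$ be surjective functions. Suppose $V_1^* \subseteq V_1$ and $V_2^* \subseteq V_2$ satisfy $|V_1^*| > |V_1|/2$ and $|V_2^*| > |V_2|/2$. Then at least one of the following holds: (A) there exists $w \in W$ with $F_1(w) \in V_1^*$ and $F_2(w) \in V_2^*$; or (B) there exist $w, w' \in W$ such that $F_2(w) = F_2(w')$, $F_1(w) \ne F_1(w')$, and $F_1(w), F_1(w') \in V_1^*$. -/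
theorem stmt0 {V1 V2 W : Type*} [Fintype V1] [Fintype V2] [Fintype W]
    (F1 : W → V1) (F2 : W → V2)
    (hF1 : Function.Surjective F1) (hF2 : Function.Surjective F2)
    (hcard : Fintype.card V2 ≤ Fintype.card V1)
    (S1 : Set V1) (S2 : Set V2)
    (hS1 : Fintype.card V1 < 2 * S1.ncard) (hS2 : Fintype.card V2 < 2 * S2.ncard) :
    (∃ w : W, F1 w ∈ S1 ∧ F2 w ∈ S2) ∨
      (∃ w w' : W, F2 w = F2 w' ∧ F1 w ≠ F1 w' ∧ F1 w ∈ S1 ∧ F1 w' ∈ S1) := by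
  by_contra hcon
  push_neg at hcon
  obtain ⟨hA, hB⟩ := hcon
  obtain ⟨s, hs⟩ := hF1.hasRightInverse
  have h : S1 → ↥(S2ᶜ) := fun v =>
    ⟨F2 (s v), fun hmem => hA (s v) (by rw [hs v]; exact v.2) hmem⟩
  -- need to define with proof of injectivity; redo as explicit
  clear h
  set h : S1 → ↥(S2ᶜ) := fun v =>
    ⟨F2 (s v), fun hmem => hA (s v) (by rw [hs v]; exact v.2) hmem⟩ with hh
  have hinj : Function.Injective h := by
    intro a b hab
    have h2 : F2 (s a) = F2 (s b) := congrArg Subtype.val hab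
    have := hB (s a) (s b) h2
    rw [hs a, hs b] at this
    have h1 : (a : V1) = b := by
      by_contra hne
      exact this hne a.2 b.2
    exact Subtype.ext h1
  have hle : Nat.card S1 ≤ Nat.card ↥(S2ᶜ) := Nat.card_le_card_of_injective h hinj
  have e1 : S2.ncard + S2ᶜ.ncard = Nat.card V2 := Set.ncard_add_ncard_compl S2
  rw [Nat.card_coe_set_eq, Nat.card_coe_set_eq] at hle
  rw [Nat.card_eq_fintype_card] at e1
  omega
end

section
/- Let $X$ and $Y$ be compact metric spaces and $\mathcal{F} = (g_1, \ldots, g_N)$ an $N$-tuple of continuous injective functions from $X$ to $Y$. Let $\hat{\mathcal{P}}$ be an intersective partition of $[N] \times [2]$ (i.e., there exist $i_1, i_2 \in [N]$ with $(i_1, 1)$ and $(i_2, 2)$ in the same block) such that $X^\Delta_{\hat{\mathcal{P}}} \ne \emptyset$. Then there exists a homeomorphism $T : \pi_1(X^\Delta_{\hat{\mathcal{P}}}) \to \pi_2(X^\Delta_{\hat{\mathcal{P}}})$ such that for all $i_1 \ne i_2$ in $[N]$ with $(i_1, 1)$ and $(i_2, 2)$ in the same block of $\hat{\mathcal{P}}$,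 and all $x \in \pi_1(X^\Delta_{\hat{\mathcal{P}}})$, it holds that $g_{i_1}(x) = g_{i_2}(T(x))$. -/
/-- `evalAt g (x₁,x₂) (i,j) = g_i(x_j)`. -/
def evalAt {X Y : Type*} {N : ℕ} (g : Fin N → X → Y) (p : X × X)
    (a : Fin N × Fin 2) : Y :=
  g a.1 (if a.2 = 0 then p.1 else p.2)

/-- The partition (setoid) of `[N] × [2]` induced by a pair `(x₁,x₂)`. -/
def inducedPartition {X Y : Type*} {N : ℕ} (g : Fin N → X → Y) (p : X × X) :
    Setoid (Fin N × Fin 2) :=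
  Setoid.ker (evalAt g p)

/-!
The two injections `g_{i₁}` and `g_{i₂}` of an intersective pair `(i₁, 1) ∼ (i₂, 2)` satisfy
`g_{i₁}(x₁) = g_{i₂}(x₂)` on `X^Δ_P`, so `X^Δ_P` is the graph of a bijection `T` between its two
projections. Since `g_{i₂} ∘ T = g_{i₁}` and `g_{i₂}` is an embedding (a continuous injection of a
compact space), `T` is continuous, and symmetrically so is `T⁻¹`.
-/

open Topology

lemma apply_eq_apply_of_inducedPartition_eq {X Y : Type*} {N : ℕ} {g : Fin N → X → Y}
    {p : X × X} {P : Setoid (Fin N × Fin 2)} (hp : inducedPartition g p = P) {i j : Fin N}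
    (hij : P.r (i, 0) (j, 1)) : g i p.1 = g j p.2 := by
  subst hp
  simpa [evalAt] using Setoid.ker_def.mp hij

lemma exists_homeomorph_image_fst_image_snd {α β Z : Type*} [TopologicalSpace α]
    [TopologicalSpace β] [TopologicalSpace Z] {s : Set (α × β)} {u : α → Z} {v : β → Z}
    (hu : IsEmbedding u) (hv : IsEmbedding v) (hs : ∀ p ∈ s, u p.1 = v p.2) :
    ∃ T : Prod.fst '' s ≃ₜ Prod.snd '' s, ∀ x : Prod.fst '' s, ((x : α), (T x : β)) ∈ s := by
  have hfst : ∀ x : Prod.fst '' s, ∃ y, ((x : α), y) ∈ s := by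
    rintro ⟨_, p, hp, rfl⟩
    exact ⟨p.2, hp⟩
  have hsnd : ∀ y : Prod.snd '' s, ∃ x, (x, (y : β)) ∈ s := by
    rintro ⟨_, p, hp, rfl⟩
    exact ⟨p.1, hp⟩
  choose f hf using hfst
  choose f' hf' using hsnd
  let F : Prod.fst '' s → Prod.snd '' s := fun x => ⟨f x, _, hf x, rfl⟩
  let G : Prod.snd '' s → Prod.fst '' s := fun y => ⟨f' y, _, hf' y, rfl⟩
  have hvF : ∀ x, v (f x) = u x := fun x => (hs _ (hf x)).symm
  have huG : ∀ y, u (f' y) = v y := fun y => hs _ (hf' y)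
  refine ⟨⟨⟨F, G, fun x => ?_, fun y => ?_⟩, ?_, ?_⟩, hf⟩
  · exact Subtype.ext <| hu.injective <| (huG (F x)).trans (hvF x)
  · exact Subtype.ext <| hv.injective <| (hvF (G y)).trans (huG y)
  · refine (hv.continuous_iff.mpr ?_).subtype_mk _
    simpa only [Function.comp_def, hvF] using hu.continuous.comp continuous_subtype_val
  · refine (hu.continuous_iff.mpr ?_).subtype_mk _
    simpa only [Function.comp_def, huG] using hv.continuous.comp continuous_subtype_val

theorem stmt5_general {X Y : Type*} [MetricSpace X] [CompactSpace X]
    [MetricSpace Y] (N : ℕ) (g : Fin N → C(X, Y))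
    (hginj : ∀ i, Function.Injective (g i))
    (P : Setoid (Fin N × Fin 2))
    (hintersective : ∃ i₁ i₂ : Fin N, P.r (i₁, 0) (i₂, 1)) :
    ∃ T : (Prod.fst '' {p : X × X | p.1 ≠ p.2 ∧
            inducedPartition (fun i => (g i : X → Y)) p = P}) ≃ₜ
          (Prod.snd '' {p : X × X | p.1 ≠ p.2 ∧
            inducedPartition (fun i => (g i : X → Y)) p = P}),
      ∀ i₁ i₂ : Fin N, i₁ ≠ i₂ → P.r (i₁, 0) (i₂, 1) →
        ∀ x : (Prod.fst '' {p : X × X | p.1 ≠ p.2 ∧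
            inducedPartition (fun i => (g i : X → Y)) p = P}),
          g i₁ (x : X) = g i₂ ((T x : X)) := by
  obtain ⟨i, j, hij⟩ := hintersective
  have hgraph : ∀ p ∈ {p : X × X | p.1 ≠ p.2 ∧
      inducedPartition (fun i => (g i : X → Y)) p = P},
      ∀ i₁ i₂, P.r (i₁, 0) (i₂, 1) → g i₁ p.1 = g i₂ p.2 := fun _ hp _ _ =>
    apply_eq_apply_of_inducedPartition_eq hp.2
  have hembed : ∀ k, IsEmbedding (g k) := fun k =>
    ((g k).continuous.isClosedEmbedding (hginj k)).isEmbedding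
  obtain ⟨T, hT⟩ := exists_homeomorph_image_fst_image_snd (hembed i) (hembed j)
    fun p hp => hgraph p hp i j hij
  exact ⟨T, fun i₁ i₂ _ h x => hgraph _ (hT x) i₁ i₂ h⟩

theorem stmt5 {X Y : Type*} [MetricSpace X] [CompactSpace X]
    [MetricSpace Y] [CompactSpace Y] (N : ℕ) (g : Fin N → C(X, Y))
    (hginj : ∀ i, Function.Injective (g i))
    (P : Setoid (Fin N × Fin 2))
    (hintersective : ∃ i₁ i₂ : Fin N, P.r (i₁, 0) (i₂, 1))
    (hne : {p : X × X | p.1 ≠ p.2 ∧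
      inducedPartition (fun i => (g i : X → Y)) p = P}.Nonempty) :
    ∃ T : (Prod.fst '' {p : X × X | p.1 ≠ p.2 ∧
            inducedPartition (fun i => (g i : X → Y)) p = P}) ≃ₜ
          (Prod.snd '' {p : X × X | p.1 ≠ p.2 ∧
            inducedPartition (fun i => (g i : X → Y)) p = P}),
      ∀ i₁ i₂ : Fin N, i₁ ≠ i₂ → P.r (i₁, 0) (i₂, 1) →
        ∀ x : (Prod.fst '' {p : X × X | p.1 ≠ p.2 ∧
            inducedPartition (fun i => (g i : X → Y)) p = P}),
          g i₁ (x : X) = g i₂ ((T x : X)) :=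
  stmt5_general N g hginj P hintersective
end

section
/- Let $Y$ be a compact metric space, let $f_1, \ldots, f_r \in C(Y, [0,1])$ and $\epsilon > 0$. For each $\ell \in [r]$ let $\mathcal{C}_\ell$ be a finite family of pairwise disjoint closed subsets of $Y$, each of diameter smaller than $\delta_{f_\ell}(\epsilon/2)$. Then there exist functions $\tilde{f}_1, \ldots, \tilde{f}_r \in C(Y, [0,1])$ such that: (a) $\|\tilde{f}_\ell - f_\ell\|_\infty \le \epsilon$ for all $\ell \in [r]$; (b) for every $\ell \in [r]$, distinct $C, C' \in \mathcal{C}_\ell$, $x \in C$, and $x' \in C'$, it holds $\tilde{f}_\ell(x) \ne \tilde{f}_\ell(x')$; (c) for every $\ell_1 \ne \ell_2$ in $[r]$ and every $x_1 \in \bigcup \mathcal{C}_{\ell_1}$, $x_2 \in \bigcup \mathcal{C}_{\ell_2}$, it holds $\tilde{f}_{\ell_1}(x_1) \ne \tilde{f}_{\ell_2}(x_2)$. -/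
open scoped ENNReal

/-- The modulus `δ_f(ε)`: the supremum (in `[0,∞]`) of all `δ'` such that any two points at
distance at most `δ'` have `f`-values within `ε` of each other. -/
noncomputable def deltaMod {Y : Type*} [MetricSpace Y] (f : Y → ℝ) (ε : ℝ) : ℝ≥0∞ :=
  sSup {δ' : ℝ≥0∞ | ∀ y₁ y₂ : Y, edist y₁ y₂ ≤ δ' → |f y₁ - f y₂| ≤ ε}

/-!
Every piece `s ∈ C ℓ`, over all `ℓ` at once, gets its own value `v (ℓ, s) ∈ [0, 1]` within `ε`
of `f ℓ` on `s`: since `f ℓ` oscillates by at most `ε / 2` on `s`, there are infinitely many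
candidates, and finitely many infinite sets admit an injective choice. The function equal to
`v (ℓ, s)` on each piece is continuous on the finite disjoint union of the closed pieces, and
Tietze's theorem extends it to all of `Y`, still within `ε` of `f ℓ` and with values in `[0, 1]`.
-/

open Set

lemma abs_sub_le_of_ediam_lt_deltaMod {Y : Type*} [MetricSpace Y] {f : Y → ℝ} {ε : ℝ}
    {s : Set Y} (h : Metric.ediam s < deltaMod f ε) {x y : Y} (hx : x ∈ s) (hy : y ∈ s) :
    |f x - f y| ≤ ε := by
  obtain ⟨δ', hδ', hlt⟩ := lt_sSup_iff.1 h
  exact hδ' x y ((Metric.edist_le_ediam_of_mem hx hy).trans hlt.le)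

/-- Hall's condition holds because each `T i` contains `card ι` points. -/
lemma exists_injective_forall_mem_of_infinite {ι α : Type*} [Finite ι] {T : ι → Set α}
    (hT : ∀ i, (T i).Infinite) : ∃ v : ι → α, Function.Injective v ∧ ∀ i, v i ∈ T i := by
  classical
  have := Fintype.ofFinite ι
  choose t htT hcard using fun i => (hT i).exists_subset_card_eq (Fintype.card ι)
  obtain ⟨v, hinj, hv⟩ := (Finset.all_card_le_biUnion_card_iff_exists_injective t).1 fun s => by
    obtain rfl | ⟨i, hi⟩ := s.eq_empty_or_nonempty
    · simp
    · calc s.card ≤ Fintype.card ι := s.card_le_univ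
        _ = (t i).card := (hcard i).symm
        _ ≤ (s.biUnion t).card := Finset.card_le_card (Finset.subset_biUnion_of_mem t hi)
  exact ⟨v, hinj, fun i => htT i (hv i)⟩

lemma infinite_setOf_mem_Icc_forall_abs_sub_le {X : Type*} {s : Set X} {f : X → ℝ} {ε : ℝ}
    (hε : 0 < ε) (hf : ∀ x ∈ s, f x ∈ Icc (0 : ℝ) 1)
    (hosc : ∀ x ∈ s, ∀ y ∈ s, |f x - f y| ≤ ε / 2) :
    {t ∈ Icc (0 : ℝ) 1 | ∀ x ∈ s, |t - f x| ≤ ε}.Infinite := by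
  obtain rfl | ⟨y, hy⟩ := s.eq_empty_or_nonempty
  · simpa only [mem_empty_iff_false, false_imp_iff, implies_true, sep_true] using
      Icc_infinite (zero_lt_one' ℝ)
  obtain ⟨hy0, hy1⟩ := hf y hy
  refine (Icc_infinite (a := max 0 (f y - ε / 2)) (b := min 1 (f y + ε / 2)) ?_).mono ?_
  · apply max_lt <;> apply lt_min <;> linarith
  · rintro t ⟨ht₁, ht₂⟩
    refine ⟨⟨(le_max_left _ _).trans ht₁, ht₂.trans (min_le_left _ _)⟩, fun x hx => ?_⟩
    have hyx := abs_le.1 (hosc y hy x hx)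
    rw [abs_le]
    constructor <;> linarith [le_max_right 0 (f y - ε / 2), min_le_right 1 (f y + ε / 2)]

lemma exists_forall_eq_of_pairwiseDisjoint {X β : Type*} [Nonempty β] {S : Set (Set X)}
    (hS : S.Pairwise Disjoint) (c : S → β) :
    ∃ g : X → β, ∀ s : S, ∀ x ∈ (s : Set X), g x = c s := by
  classical
  refine ⟨fun x => if h : ∃ s : S, x ∈ (s : Set X) then c h.choose else Classical.arbitrary β,
    fun s x hx => ?_⟩
  have h : ∃ s : S, x ∈ (s : Set X) := ⟨s, hx⟩
  dsimp only
  rw [dif_pos h]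
  congr
  by_contra hne
  exact disjoint_left.1 (hS h.choose.2 s.2 fun e => hne (Subtype.ext e)) h.choose_spec hx

/-- Extend `g - f` into `[-δ, δ]` by Tietze, then clamp `f + (g - f)` to `[0, 1]`: clamping does
not increase the distance to `f`, whose values already lie in `[0, 1]`. -/
lemma exists_continuous_Icc_eqOn_abs_sub_le {X : Type*} [TopologicalSpace X] [NormalSpace X]
    {K : Set X} (hK : IsClosed K) {g : X → ℝ} (hg : ContinuousOn g K)
    (hg01 : ∀ x ∈ K, g x ∈ Icc (0 : ℝ) 1) (f : C(X, ℝ)) (hf01 : ∀ x, f x ∈ Icc (0 : ℝ) 1)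
    {δ : ℝ} (hδ : 0 ≤ δ) (hgf : ∀ x ∈ K, |g x - f x| ≤ δ) :
    ∃ F : C(X, ℝ), (∀ x, F x ∈ Icc (0 : ℝ) 1) ∧ (∀ x, |F x - f x| ≤ δ) ∧ EqOn F g K := by
  obtain ⟨H, hH, hHK⟩ := ContinuousMap.exists_restrict_eq_forall_mem_of_closed
    ⟨K.domRestrict fun x => g x - f x, (hg.sub f.continuous.continuousOn).domRestrict⟩
    (t := Icc (-δ) δ) (fun x => abs_le.1 (hgf x x.2)) (nonempty_Icc.2 (by linarith)) hK
  refine ⟨⟨fun x => projIcc (0 : ℝ) 1 zero_le_one (f x + H x),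
    continuous_subtype_val.comp (continuous_projIcc.comp (f.continuous.add H.continuous))⟩,
    fun x => (projIcc (0 : ℝ) 1 zero_le_one _).2, fun x => ?_, fun x hx => ?_⟩
  · calc |(projIcc (0 : ℝ) 1 zero_le_one (f x + H x) : ℝ) - f x|
        = |(projIcc (0 : ℝ) 1 zero_le_one (f x + H x) : ℝ) - projIcc 0 1 zero_le_one (f x)| := by
          rw [projIcc_of_mem _ (hf01 x)]
      _ ≤ |f x + H x - f x| := abs_projIcc_sub_projIcc _
      _ ≤ δ := by simpa using abs_le.2 (hH x)
  · have hHx : H x = g x - f x := congrArg (· ⟨x, hx⟩) hHK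
    change (projIcc (0 : ℝ) 1 zero_le_one (f x + H x) : ℝ) = g x
    rw [hHx, add_sub_cancel, projIcc_of_mem _ (hg01 x hx)]

lemma exists_continuous_Icc_forall_eq_of_pairwiseDisjoint {X : Type*} [TopologicalSpace X]
    [NormalSpace X] {S : Set (Set X)} (hfin : S.Finite) (hclosed : ∀ s ∈ S, IsClosed s)
    (hdisj : S.Pairwise Disjoint) (c : S → ℝ) (hc01 : ∀ s, c s ∈ Icc (0 : ℝ) 1)
    (f : C(X, ℝ)) (hf01 : ∀ x, f x ∈ Icc (0 : ℝ) 1) {δ : ℝ} (hδ : 0 ≤ δ)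
    (hcf : ∀ s : S, ∀ x ∈ (s : Set X), |c s - f x| ≤ δ) :
    ∃ F : C(X, ℝ), (∀ x, F x ∈ Icc (0 : ℝ) 1) ∧ (∀ x, |F x - f x| ≤ δ) ∧
      ∀ s : S, ∀ x ∈ (s : Set X), F x = c s := by
  have := hfin.to_subtype
  obtain ⟨g, hg⟩ := exists_forall_eq_of_pairwiseDisjoint hdisj c
  have hK : IsClosed (⋃ s : S, (s : Set X)) := isClosed_iUnion_of_finite fun s => hclosed s s.2
  have hgK : ContinuousOn g (⋃ s : S, (s : Set X)) :=
    (locallyFinite_of_finite _).continuousOn_iUnion (fun s => hclosed s s.2)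
      fun s => continuousOn_const.congr (hg s)
  obtain ⟨F, hF01, hFf, hFg⟩ := exists_continuous_Icc_eqOn_abs_sub_le hK hgK
    (fun x hx => by obtain ⟨s, hs⟩ := mem_iUnion.1 hx; exact hg s x hs ▸ hc01 s) f hf01 hδ
    (fun x hx => by obtain ⟨s, hs⟩ := mem_iUnion.1 hx; exact hg s x hs ▸ hcf s x hs)
  exact ⟨F, hF01, hFf, fun s x hx => (hFg (mem_iUnion_of_mem s hx)).trans (hg s x hx)⟩

theorem stmt6_general {Y : Type*} [MetricSpace Y] (r : ℕ)
    (f : Fin r → C(Y, ℝ)) (hrange : ∀ ℓ y, f ℓ y ∈ Set.Icc (0:ℝ) 1)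
    (ε : ℝ) (hε : 0 < ε)
    (C : Fin r → Set (Set Y))
    (hfin : ∀ ℓ, (C ℓ).Finite)
    (hclosed : ∀ ℓ, ∀ s ∈ C ℓ, IsClosed s)
    (hdisj : ∀ ℓ, (C ℓ).Pairwise Disjoint)
    (hdiam : ∀ ℓ, ∀ s ∈ C ℓ, EMetric.diam s < deltaMod (f ℓ) (ε / 2)) :
    ∃ ftil : Fin r → C(Y, ℝ),
      (∀ ℓ y, ftil ℓ y ∈ Set.Icc (0:ℝ) 1) ∧
      (∀ ℓ, ∀ y, |ftil ℓ y - f ℓ y| ≤ ε) ∧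
      (∀ ℓ, ∀ s ∈ C ℓ, ∀ s' ∈ C ℓ, s ≠ s' →
        ∀ x ∈ s, ∀ x' ∈ s', ftil ℓ x ≠ ftil ℓ x') ∧
      (∀ ℓ₁ ℓ₂ : Fin r, ℓ₁ ≠ ℓ₂ →
        ∀ x₁ ∈ ⋃₀ C ℓ₁, ∀ x₂ ∈ ⋃₀ C ℓ₂, ftil ℓ₁ x₁ ≠ ftil ℓ₂ x₂) := by
  have := fun ℓ => (hfin ℓ).to_subtype
  obtain ⟨v, hvinj, hv⟩ := exists_injective_forall_mem_of_infinite (ι := Σ ℓ, C ℓ)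
    fun i => infinite_setOf_mem_Icc_forall_abs_sub_le hε (fun x _ => hrange i.1 x)
      fun x hx y hy => abs_sub_le_of_ediam_lt_deltaMod (hdiam i.1 i.2 i.2.2) hx hy
  choose F hF01 hFf hFv using fun ℓ => exists_continuous_Icc_forall_eq_of_pairwiseDisjoint
    (hfin ℓ) (hclosed ℓ) (hdisj ℓ) (fun s => v ⟨ℓ, s⟩) (fun s => (hv _).1) (f ℓ) (hrange ℓ)
    hε.le fun s => (hv ⟨ℓ, s⟩).2
  refine ⟨F, hF01, hFf, ?_, ?_⟩
  · rintro ℓ s hs s' hs' hne x hx x' hx'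
    rw [hFv ℓ ⟨s, hs⟩ x hx, hFv ℓ ⟨s', hs'⟩ x' hx']
    exact fun h => hne (by simpa using hvinj h)
  · rintro ℓ₁ ℓ₂ hne x₁ ⟨s₁, hs₁, hx₁⟩ x₂ ⟨s₂, hs₂, hx₂⟩
    rw [hFv ℓ₁ ⟨s₁, hs₁⟩ x₁ hx₁, hFv ℓ₂ ⟨s₂, hs₂⟩ x₂ hx₂]
    exact fun h => hne (congrArg Sigma.fst (hvinj h))

theorem stmt6 {Y : Type*} [MetricSpace Y] [CompactSpace Y] (r : ℕ)
    (f : Fin r → C(Y, ℝ)) (hrange : ∀ ℓ y, f ℓ y ∈ Set.Icc (0:ℝ) 1)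
    (ε : ℝ) (hε : 0 < ε)
    (C : Fin r → Set (Set Y))
    (hfin : ∀ ℓ, (C ℓ).Finite)
    (hclosed : ∀ ℓ, ∀ s ∈ C ℓ, IsClosed s)
    (hdisj : ∀ ℓ, (C ℓ).Pairwise Disjoint)
    (hdiam : ∀ ℓ, ∀ s ∈ C ℓ, EMetric.diam s < deltaMod (f ℓ) (ε / 2)) :
    ∃ ftil : Fin r → C(Y, ℝ),
      (∀ ℓ y, ftil ℓ y ∈ Set.Icc (0:ℝ) 1) ∧
      (∀ ℓ, ∀ y, |ftil ℓ y - f ℓ y| ≤ ε) ∧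
      (∀ ℓ, ∀ s ∈ C ℓ, ∀ s' ∈ C ℓ, s ≠ s' →
        ∀ x ∈ s, ∀ x' ∈ s', ftil ℓ x ≠ ftil ℓ x') ∧
      (∀ ℓ₁ ℓ₂ : Fin r, ℓ₁ ≠ ℓ₂ →
        ∀ x₁ ∈ ⋃₀ C ℓ₁, ∀ x₂ ∈ ⋃₀ C ℓ₂, ftil ℓ₁ x₁ ≠ ftil ℓ₂ x₂) :=
  stmt6_general r f hrange ε hε C hfin hclosed hdisj hdiam
end

section
/- Let $(G, X)$ be a topological dynamical system where $G$ is a discrete group acting by homeomorphisms on a compact metric space $(X, d)$. Fix $r, N \in \mathbb{N}$, a finite subset $F \subseteq G$, and $\epsilon > 0$. Then the set $X^{(F,\epsilon)} := \{ x \in X : G \cdot x = F \cdot x \text{ or } \mathrm{sep}_\epsilon(F \cdot x) \ge rN \}$ is a closed subset of $X$. -/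
theorem stmt8 {G : Type*} [Group G] {X : Type*} [MetricSpace X] [CompactSpace X]
    [MulAction G X] (hcont : ∀ g : G, Continuous (fun x : X => g • x))
    (r N : ℕ) (F : Finset G) (ε : ℝ) (hε : 0 < ε) :
    IsClosed {x : X |
      MulAction.orbit G x = (fun g : G => g • x) '' (F : Set G) ∨
      ∃ S : Finset X, (S : Set X) ⊆ (fun g : G => g • x) '' (F : Set G) ∧
        r * N ≤ S.card ∧
        (S : Set X).Pairwise (fun a b => ε ≤ dist a b)} := by
  classical
  have key : {x : X |
      MulAction.orbit G x = (fun g : G => g • x) '' (F : Set G) ∨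
      ∃ S : Finset X, (S : Set X) ⊆ (fun g : G => g • x) '' (F : Set G) ∧
        r * N ≤ S.card ∧
        (S : Set X).Pairwise (fun a b => ε ≤ dist a b)} =
      {x : X | ∀ g : G, ∃ f ∈ F, f • x = g • x} ∪
      ⋃ T ∈ ((F.powerset.filter fun T => r * N ≤ T.card) : Set (Finset G)),
        {x : X | ∀ f ∈ T, ∀ f' ∈ T, f ≠ f' → ε ≤ dist (f • x) (f' • x)} := by
    ext x
    simp only [Set.mem_setOf_eq, Set.mem_union, Set.mem_iUnion, Finset.coe_filter,
      Finset.mem_powerset, exists_prop, Set.mem_setOf_eq]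
    constructor
    · rintro (h | ⟨S, hS, hcard, hsep⟩)
      · left
        intro g
        have hg : g • x ∈ MulAction.orbit G x := MulAction.mem_orbit x g
        rw [h] at hg
        obtain ⟨f, hf, hfx⟩ := hg
        exact ⟨f, hf, hfx⟩
      · right
        set φ : X → G := fun s => if h : ∃ f ∈ F, f • x = s then h.choose else 1 with hφ
        have hφs : ∀ s ∈ S, φ s ∈ F ∧ φ s • x = s := by
          intro s hs
          have h : ∃ f ∈ F, f • x = s := by
            obtain ⟨f, hf, hfx⟩ := hS hs
            exact ⟨f, hf, hfx⟩
          simp only [hφ, dif_pos h]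
          exact ⟨h.choose_spec.1, h.choose_spec.2⟩
        have hinj : Set.InjOn φ S := by
          intro a ha b hb hab
          rw [← (hφs a ha).2, ← (hφs b hb).2, hab]
        refine ⟨S.image φ, ⟨?_, ?_⟩, ?_⟩
        · intro f hf
          obtain ⟨s, hs, rfl⟩ := Finset.mem_image.mp hf
          exact (hφs s hs).1
        · calc r * N ≤ S.card := hcard
            _ = (S.image φ).card := (Finset.card_image_of_injOn hinj).symm
        · intro f hf f' hf' hne
          obtain ⟨s, hs, rfl⟩ := Finset.mem_image.mp hf
          obtain ⟨s', hs', rfl⟩ := Finset.mem_image.mp hf'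
          have hss' : s ≠ s' := fun h => hne (by rw [h])
          rw [(hφs s hs).2, (hφs s' hs').2]
          exact hsep (Finset.mem_coe.mpr hs) (Finset.mem_coe.mpr hs') hss'
    · rintro (h | ⟨T, ⟨hTF, hTcard⟩, hTsep⟩)
      · left
        apply Set.Subset.antisymm
        · rintro y ⟨g, rfl⟩
          obtain ⟨f, hf, hfx⟩ := h g
          exact ⟨f, hf, hfx⟩
        · rintro y ⟨f, hf, rfl⟩
          exact MulAction.mem_orbit x f
      · right
        have hTF' : T ⊆ F := hTF
        have hinj : Set.InjOn (fun f : G => f • x) T := by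
          intro a ha b hb hab
          by_contra hne
          have h1 := hTsep a (Finset.mem_coe.mp ha) b (Finset.mem_coe.mp hb) hne
          rw [show a • x = b • x from hab] at h1
          simp only [dist_self] at h1
          linarith
        refine ⟨T.image (fun f => f • x), ?_, ?_, ?_⟩
        · intro s hs
          obtain ⟨f, hf, rfl⟩ := Finset.mem_image.mp (Finset.mem_coe.mp hs)
          exact ⟨f, hTF' hf, rfl⟩
        · rw [Finset.card_image_of_injOn hinj]
          exact hTcard
        · intro a ha b hb hne
          obtain ⟨f, hf, rfl⟩ := Finset.mem_image.mp (Finset.mem_coe.mp ha)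
          obtain ⟨f', hf', rfl⟩ := Finset.mem_image.mp (Finset.mem_coe.mp hb)
          exact hTsep f hf f' hf' (fun h => hne (by rw [h]))
  rw [key]
  apply IsClosed.union
  · have h1 : {x : X | ∀ g : G, ∃ f ∈ F, f • x = g • x} =
        ⋂ g : G, ⋃ f ∈ (F : Set G), {x : X | f • x = g • x} := by
      ext x; simp
    rw [h1]
    exact isClosed_iInter fun g =>
      Set.Finite.isClosed_biUnion F.finite_toSet fun f _ =>
        isClosed_eq (hcont f) (hcont g)
  · refine Set.Finite.isClosed_biUnion (Finset.finite_toSet _) fun T _ => ?_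
    have h2 : {x : X | ∀ f ∈ T, ∀ f' ∈ T, f ≠ f' → ε ≤ dist (f • x) (f' • x)} =
        ⋂ f ∈ (T : Set G), ⋂ f' ∈ (T : Set G), ⋂ (_ : f ≠ f'),
          {x : X | ε ≤ dist (f • x) (f' • x)} := by
      ext x; simp
    rw [h2]
    exact isClosed_biInter fun f _ => isClosed_biInter fun f' _ =>
      isClosed_iInter fun _ =>
        isClosed_le continuous_const ((hcont f).dist (hcont f'))
end

section
/- Let $X$ and $Y$ be compact metric spaces and $\mathcal{F} = (g_1, \ldots, g_N)$ an $N$-tuple of continuous injective functions from $X$ to $Y$. Let $\hat{\mathcal{P}}$ be a partition of $[N] \times [2]$. Then the set $X^\Delta_{\hat{\mathcal{P}}}$ is a countable union of compact $\mathcal{F}$-coherent sets. -/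
/-- A subset `Z` of `X^Δ_{P̂}` is `𝓕`-coherent if indices in different blocks of `P̂`
have disjoint images over `Z`. -/
def FCoherent {X Y : Type*} {N : ℕ} (g : Fin N → X → Y) (P : Setoid (Fin N × Fin 2))
    (Z : Set (X × X)) : Prop :=
  ∀ a b : Fin N × Fin 2, ¬ P.r a b →
    Disjoint ((fun p => evalAt g p a) '' Z) ((fun p => evalAt g p b) '' Z)

/-!
The conditions `x₁ ≠ x₂` and `gᵢ(xⱼ) ≠ gₖ(xₗ)` across blocks of `P̂` are open, the equalities
within blocks are closed, so `X^Δ_{P̂}` is locally closed in the compact metrizable space `X × X`.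
By continuity, values that differ at a point stay apart on a whole neighbourhood of it, so every
point has an `𝓕`-coherent neighbourhood. Intersecting the closed part of `X^Δ_{P̂}` with the
closures of those countably many basic open sets that are small enough gives the compact pieces.
-/

open Filter Topology TopologicalSpace

section LocallyClosed

variable {X : Type*} [TopologicalSpace X] [CompactSpace X] [RegularSpace X]
  [SecondCountableTopology X]

theorem IsLocallyClosed.exists_iUnion_isCompact_of_forall_exists_mem_nhds {S : Set X}
    (hS : IsLocallyClosed S) {Q : Set X → Prop} (hQ : Antitone Q) (hQ_empty : Q ∅)
    (hloc : ∀ x ∈ S, ∃ U ∈ 𝓝 x, Q U) :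
    ∃ Z : ℕ → Set X, (∀ n, IsCompact (Z n)) ∧ (∀ n, Z n ⊆ S) ∧ (∀ n, Q (Z n)) ∧
      ⋃ n, Z n = S := by
  classical
  obtain ⟨U, C, hU, hC, rfl⟩ := hS
  obtain ⟨f, hf⟩ := Set.countable_iff_exists_subset_range.1 (countable_countableBasis X)
  let good : ℕ → Prop := fun n => closure (f n) ⊆ U ∧ Q (closure (f n))
  let Z : ℕ → Set X := fun n => if good n then closure (f n) ∩ C else ∅
  have hZ_sub : ∀ n, Z n ⊆ U ∩ C := fun n => by
    by_cases h : good n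
    · simpa [Z, h] using Set.inter_subset_inter_left C h.1
    · simp [Z, h]
  refine ⟨Z, fun n => ?_, hZ_sub, fun n => ?_, ?_⟩
  · by_cases h : good n
    · simpa [Z, h] using (isClosed_closure.inter hC).isCompact
    · simp [Z, h]
  · by_cases h : good n
    · simpa [Z, h] using hQ Set.inter_subset_left h.2
    · simpa [Z, h] using hQ_empty
  refine (Set.iUnion_subset hZ_sub).antisymm fun x hx => ?_
  obtain ⟨V, hV, hQV⟩ := hloc x hx
  obtain ⟨t, ht, hxt, htUV⟩ := (isBasis_countableBasis X).exists_closure_subset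
    (inter_mem (hU.mem_nhds hx.1) hV)
  obtain ⟨n, rfl⟩ := hf ht
  have hn : good n :=
    ⟨htUV.trans Set.inter_subset_left, hQ (htUV.trans Set.inter_subset_right) hQV⟩
  exact Set.mem_iUnion.2 ⟨n, by simpa [Z, hn] using ⟨subset_closure hxt, hx.2⟩⟩

end LocallyClosed

section Coherence

variable {X Y : Type*} {N : ℕ} (g : Fin N → X → Y) (P : Setoid (Fin N × Fin 2))

theorem inducedPartition_r_iff {p : X × X} {a b : Fin N × Fin 2} :
    (inducedPartition g p).r a b ↔ evalAt g p a = evalAt g p b :=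
  Iff.rfl

theorem fCoherent_iff {Z : Set (X × X)} :
    FCoherent g P Z ↔ ∀ a b, ¬ P.r a b → ∀ p ∈ Z, ∀ q ∈ Z, evalAt g p a ≠ evalAt g q b := by
  simp only [FCoherent, Set.disjoint_left, Set.mem_image]
  grind

theorem antitone_fCoherent : Antitone (FCoherent g P) :=
  fun _ _ hst hZ a b hab => (hZ a b hab).mono (Set.image_mono hst) (Set.image_mono hst)

theorem fCoherent_empty : FCoherent g P ∅ := fun a b _ => by simp

variable [TopologicalSpace X] [TopologicalSpace Y]

theorem continuous_evalAt {g : Fin N → X → Y} (hg : ∀ i, Continuous (g i))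
    (a : Fin N × Fin 2) : Continuous fun p => evalAt g p a := by
  unfold evalAt
  split_ifs
  exacts [(hg _).comp continuous_fst, (hg _).comp continuous_snd]

variable [T2Space Y] {g}

theorem exists_mem_nhds_fCoherent (hg : ∀ i, Continuous (g i)) {p : X × X}
    (hp : inducedPartition g p ≤ P) : ∃ U ∈ 𝓝 p, FCoherent g P U := by
  have hsep : ∀ᶠ q in 𝓝 p ×ˢ 𝓝 p, ∀ a b, ¬ P.r a b → evalAt g q.1 a ≠ evalAt g q.2 b := by
    simp only [eventually_all, ← nhds_prod_eq]
    intro a b hab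
    exact (isOpen_ne_fun ((continuous_evalAt hg a).comp continuous_fst)
      ((continuous_evalAt hg b).comp continuous_snd)).eventually_mem fun h => hab (hp h)
  obtain ⟨U, hU, hUP⟩ := eventually_prod_self_iff'.1 hsep
  exact ⟨U, hU, (fCoherent_iff g P).2 fun a b hab p hp q hq => hUP p hp q hq a b hab⟩

theorem isLocallyClosed_setOf_inducedPartition_eq [T2Space X] (hg : ∀ i, Continuous (g i)) :
    IsLocallyClosed {p : X × X | p.1 ≠ p.2 ∧ inducedPartition g p = P} := by
  have hev := continuous_evalAt hg
  have hS : {p : X × X | p.1 ≠ p.2 ∧ inducedPartition g p = P} =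
      ({p | p.1 ≠ p.2} ∩ ⋂ (a) (b) (_ : ¬ P.r a b), {p | evalAt g p a ≠ evalAt g p b}) ∩
        ⋂ (a) (b) (_ : P.r a b), {p | evalAt g p a = evalAt g p b} := by
    ext p
    simp only [Set.mem_ofPred_eq, Set.mem_inter_iff, Set.mem_iInter, Setoid.ext_iff,
      inducedPartition_r_iff]
    rw [and_assoc]
    refine and_congr_right fun _ => ?_
    grind
  rw [hS]
  refine IsLocallyClosed.inter (IsOpen.isLocallyClosed ?_) (IsClosed.isLocallyClosed ?_)
  · exact (isOpen_ne_fun continuous_fst continuous_snd).inter <| isOpen_iInter_of_finite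
      fun a => isOpen_iInter_of_finite fun b => isOpen_iInter_of_finite fun _ =>
        isOpen_ne_fun (hev a) (hev b)
  · exact isClosed_iInter fun a => isClosed_iInter fun b => isClosed_iInter fun _ =>
      isClosed_eq (hev a) (hev b)

end Coherence

theorem stmt10_general {X Y : Type*} [MetricSpace X] [CompactSpace X]
    [MetricSpace Y] (N : ℕ) (g : Fin N → C(X, Y))
    (P : Setoid (Fin N × Fin 2)) :
    ∃ Z : ℕ → Set (X × X),
      (∀ n, IsCompact (Z n)) ∧
      (∀ n, Z n ⊆ {p : X × X | p.1 ≠ p.2 ∧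
        inducedPartition (fun i => (g i : X → Y)) p = P}) ∧
      (∀ n, FCoherent (fun i => (g i : X → Y)) P (Z n)) ∧
      (⋃ n, Z n) = {p : X × X | p.1 ≠ p.2 ∧
        inducedPartition (fun i => (g i : X → Y)) p = P} := by
  have hg : ∀ i, Continuous (g i : X → Y) := fun i => (g i).continuous
  have hS := isLocallyClosed_setOf_inducedPartition_eq P hg
  exact hS.exists_iUnion_isCompact_of_forall_exists_mem_nhds (antitone_fCoherent _ P)
    (fCoherent_empty _ P) fun p hp => exists_mem_nhds_fCoherent P hg hp.2.le

theorem stmt10 {X Y : Type*} [MetricSpace X] [CompactSpace X]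
    [MetricSpace Y] [CompactSpace Y] (N : ℕ) (g : Fin N → C(X, Y))
    (hginj : ∀ i, Function.Injective (g i))
    (P : Setoid (Fin N × Fin 2)) :
    ∃ Z : ℕ → Set (X × X),
      (∀ n, IsCompact (Z n)) ∧
      (∀ n, Z n ⊆ {p : X × X | p.1 ≠ p.2 ∧
        inducedPartition (fun i => (g i : X → Y)) p = P}) ∧
      (∀ n, FCoherent (fun i => (g i : X → Y)) P (Z n)) ∧
      (⋃ n, Z n) = {p : X × X | p.1 ≠ p.2 ∧
        inducedPartition (fun i => (g i : X → Y)) p = P} :=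
  stmt10_general N g P
end

section
/- Let $X$ be a compact metric space. If $\dim(X) < n$ (Lebesgue covering dimension), then for every $\epsilon > 0$ and every integer $k \ge 0$ there exist families $\mathcal{C}_1, \ldots, \mathcal{C}_{n+k}$ such that each $\mathcal{C}_i$ is a finite family of pairwise disjoint closed subsets of $X$ of diameter at most $\epsilon$, and every point of $X$ belongs to at least $k+1$ elements of $\bigcup_{j=1}^{n+k} \mathcal{C}_j$. -/
/-- Lebesgue covering dimension is at most `n`: every open cover admits an open shrinking
(refinement indexed by the same set) of order at most `n + 1`. -/
def covDimLE (Z : Type*) [TopologicalSpace Z] (n : ℕ) : Prop :=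
  ∀ (ι : Type) (U : ι → Set Z), (∀ i, IsOpen (U i)) → (⋃ i, U i) = Set.univ →
    ∃ V : ι → Set Z, (∀ i, IsOpen (V i)) ∧ (∀ i, V i ⊆ U i) ∧ (⋃ i, V i) = Set.univ ∧
      ∀ z : Z, {i | z ∈ V i}.Finite ∧ {i | z ∈ V i}.ncard ≤ n + 1

/-- `dim X < n` (where the empty space has dimension `-1`). -/
def covDimLT (Z : Type*) [TopologicalSpace Z] (q : ℝ) : Prop :=
  IsEmpty Z ∨ ∃ n : ℕ, covDimLE Z n ∧ (n : ℝ) < q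

/-- Auxiliary counting lemma: an injective map from a finset into a finite set gives a
cardinality lower bound on the `ncard`. -/
lemma aux_card_le_ncard {ι α : Type*} (G : Finset ι) (f : ι → α) (S : Set α)
    (hinj : Set.InjOn f ↑G) (hmem : ∀ j ∈ G, f j ∈ S) (hS : S.Finite) :
    G.card ≤ S.ncard := by
  classical
  have h1 : (G.image f).card = G.card := Finset.card_image_of_injOn hinj
  have h2 : (↑(G.image f) : Set α) ⊆ S := by
    intro y hy
    simp only [Finset.coe_image, Set.mem_image, Finset.mem_coe] at hy
    obtain ⟨j, hj, rfl⟩ := hy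
    exact hmem j hj
  calc G.card = (G.image f).card := h1.symm
    _ = (↑(G.image f) : Set α).ncard := (Set.ncard_coe_finset _).symm
    _ ≤ S.ncard := Set.ncard_le_ncard h2 hS

theorem stmt15 {X : Type*} [MetricSpace X] [CompactSpace X] (n : ℕ)
    (hdim : covDimLT X n) (ε : ℝ) (hε : 0 < ε) (k : ℕ) :
    ∃ C : Fin (n + k) → Set (Set X),
      (∀ j, (C j).Finite) ∧
      (∀ j, ∀ s ∈ C j, IsClosed s ∧ Metric.diam s ≤ ε) ∧
      (∀ j, (C j).Pairwise Disjoint) ∧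
      ∀ x : X, k + 1 ≤ {p : Fin (n + k) × Set X | p.2 ∈ C p.1 ∧ x ∈ p.2}.ncard := by
  classical
  by_cases hE : IsEmpty X
  · refine ⟨fun _ => ∅, fun _ => Set.finite_empty, fun _ s hs => absurd hs (Set.notMem_empty s),
      fun _ => Set.pairwise_empty _, fun x => (hE.false x).elim⟩
  have hXne : Nonempty X := not_isEmpty_iff.mp hE
  obtain ⟨m, hm, hmltn⟩ : ∃ m : ℕ, covDimLE X m ∧ (m : ℝ) < n := hdim.resolve_left hE
  have hmn : m + 1 ≤ n := by exact_mod_cast Nat.succ_le_of_lt (by exact_mod_cast hmltn)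
  have hn1 : 1 ≤ n := le_trans (Nat.le_add_left 1 m) hmn
  -- trivial branch: the whole space is small
  by_cases hdiam : Metric.diam (Set.univ : Set X) ≤ ε
  · refine ⟨fun _ => {Set.univ}, fun _ => Set.finite_singleton _, ?_, ?_, ?_⟩
    · intro j s hs
      rw [Set.mem_singleton_iff] at hs
      subst hs
      exact ⟨isClosed_univ, hdiam⟩
    · intro j
      exact Set.pairwise_singleton _ _
    · intro x
      show k + 1 ≤ ({p : Fin (n + k) × Set X | p.2 ∈ ({Set.univ} : Set (Set X)) ∧ x ∈ p.2}).ncard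
      have hsub : ∀ j ∈ (Finset.univ : Finset (Fin (n + k))),
          (j, (Set.univ : Set X)) ∈
            {p : Fin (n + k) × Set X | p.2 ∈ ({Set.univ} : Set (Set X)) ∧ x ∈ p.2} := by
        intro j _
        exact ⟨rfl, Set.mem_univ x⟩
      have hfin : ({p : Fin (n + k) × Set X | p.2 ∈ ({Set.univ} : Set (Set X)) ∧ x ∈ p.2}).Finite := by
        apply Set.Finite.subset (Set.finite_range (fun j : Fin (n + k) => (j, (Set.univ : Set X))))
        rintro ⟨j, s⟩ ⟨hs, -⟩
        rw [Set.mem_singleton_iff] at hs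
        subst hs
        exact ⟨j, rfl⟩
      have := aux_card_le_ncard Finset.univ (fun j : Fin (n + k) => (j, (Set.univ : Set X))) _
        (fun j _ j' _ e => congrArg Prod.fst e) hsub hfin
      simp only [Finset.card_univ, Fintype.card_fin] at this
      omega
  push_neg at hdiam
  -- a countable cover by small balls
  haveI : TopologicalSpace.SeparableSpace X := by infer_instance
  set u : ℕ → X := TopologicalSpace.denseSeq X with hu_def
  have hu : DenseRange u := TopologicalSpace.denseRange_denseSeq X
  have hUcov : (⋃ i, Metric.ball (u i) (ε / 4)) = Set.univ := by
    ext x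
    simp only [Set.mem_iUnion, Set.mem_univ, iff_true]
    obtain ⟨i, hi⟩ := hu.exists_dist_lt x (ε := ε / 4) (by linarith)
    exact ⟨i, Metric.mem_ball.mpr hi⟩
  obtain ⟨V, hVo, hVsub, hVcov, hVord⟩ :=
    hm ℕ (fun i => Metric.ball (u i) (ε / 4)) (fun i => Metric.isOpen_ball) hUcov
  -- finite subcover
  obtain ⟨t, ht⟩ := isCompact_univ.elim_finite_subcover V hVo (by rw [hVcov])
  have htne : t.Nonempty := by
    obtain ⟨i, hit, -⟩ := Set.mem_iUnion₂.mp (ht (Set.mem_univ (Classical.arbitrary X)))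
    exact ⟨i, hit⟩
  -- complements are nonempty (else the whole space would be small)
  have hVc : ∀ i : ℕ, ((V i)ᶜ : Set X).Nonempty := by
    intro i
    rw [Set.nonempty_compl]
    intro hVI
    have huniv : (Set.univ : Set X) ⊆ Metric.ball (u i) (ε / 4) := by
      rw [← hVI]; exact hVsub i
    have h1 : Metric.diam (Set.univ : Set X) ≤ 2 * (ε / 4) :=
      le_trans (Metric.diam_mono huniv Metric.isBounded_ball) (Metric.diam_ball (by linarith))
    linarith
  -- distance functions
  set h : ℕ → X → ℝ := fun i x => Metric.infDist x (V i)ᶜ with hh_def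
  have hcont : ∀ i, Continuous (h i) := fun i => Metric.continuous_infDist_pt _
  have hmem : ∀ i x, 0 < h i x → x ∈ V i := by
    intro i x hx
    by_contra hxv
    have : h i x = 0 := Metric.infDist_zero_of_mem hxv
    linarith
  have hpos : ∀ i x, x ∈ V i → 0 < h i x := by
    intro i x hx
    rw [← ((hVo i).isClosed_compl.notMem_iff_infDist_pos (hVc i))]
    simpa using hx
  -- the max function
  set M : X → ℝ := fun x => t.sup' htne (fun i => h i x) with hM_def
  have hMcont : Continuous M := by
    rw [continuous_iff_continuousAt]
    intro x
    exact Filter.Tendsto.finset_sup'_nhds_apply htne (fun i _ => ((hcont i).tendsto x))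
  have hMix : ∀ x, ∃ i ∈ t, x ∈ V i := by
    intro x
    obtain ⟨i, hit, hiv⟩ := Set.mem_iUnion₂.mp (ht (Set.mem_univ x))
    exact ⟨i, hit, hiv⟩
  have hMpos : ∀ x, 0 < M x := by
    intro x
    obtain ⟨i, hit, hiv⟩ := hMix x
    exact lt_of_lt_of_le (hpos i x hiv) (Finset.le_sup' (fun i => h i x) hit)
  have hhM : ∀ i ∈ t, ∀ x, h i x ≤ M x := fun i hit x => Finset.le_sup' (fun i => h i x) hit
  -- thresholds
  set p : ℕ := n + k with hp_def
  have hp1 : 1 ≤ p := le_trans hn1 (Nat.le_add_right n k)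
  set d : ℝ := 1 / (6 * p + 6) with hd_def
  have hd : 0 < d := by
    apply div_pos one_pos
    positivity
  set a : Fin p → ℝ := fun j => 1 / 3 + (2 * (j : ℕ) + 1) * d with ha_def
  set b : Fin p → ℝ := fun j => 1 / 3 + (2 * (j : ℕ) + 2) * d with hb_def
  have hapos : ∀ j, 0 < a j := by
    intro j
    have : (0:ℝ) ≤ (2 * (j : ℕ) + 1) * d := by positivity
    simp only [ha_def]
    linarith
  have hab : ∀ j, a j < b j := by
    intro j
    simp only [ha_def, hb_def]
    have : (2 * ((j : ℕ) : ℝ) + 1) * d < (2 * (j : ℕ) + 2) * d := by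
      apply mul_lt_mul_of_pos_right _ hd
      linarith
    linarith
  have hb23 : ∀ j, b j ≤ 2 / 3 := by
    intro j
    have hj : ((j : ℕ) : ℝ) ≤ (p : ℝ) - 1 := by
      have := j.isLt
      have : ((j : ℕ) : ℝ) + 1 ≤ (p : ℝ) := by exact_mod_cast this
      linarith
    have h2 : (2 * ((j : ℕ) : ℝ) + 2) * d ≤ (2 * (p : ℝ)) * d := by
      apply mul_le_mul_of_nonneg_right _ (le_of_lt hd)
      linarith
    have hp' : (0:ℝ) < 6 * (p:ℝ) + 6 := by positivity
    have h3 : (2 * (p : ℝ)) * d ≤ 1 / 3 := by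
      rw [hd_def, mul_one_div, div_le_div_iff₀ hp' (by norm_num : (0:ℝ) < 3)]
      linarith
    simp only [hb_def]
    linarith
  have hblt1 : ∀ j, b j < 1 := fun j => lt_of_le_of_lt (hb23 j) (by norm_num)
  have hba : ∀ j j' : Fin p, (j : ℕ) < (j' : ℕ) → b j ≤ a j' := by
    intro j j' hjj
    simp only [ha_def, hb_def]
    have hc : ((j : ℕ) : ℝ) + 1 ≤ ((j' : ℕ) : ℝ) := by exact_mod_cast hjj
    have : (2 * ((j : ℕ) : ℝ) + 2) * d ≤ (2 * ((j' : ℕ) : ℝ) + 1) * d := by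
      apply mul_le_mul_of_nonneg_right _ (le_of_lt hd)
      linarith
    linarith
  -- the pieces
  set A : Fin p → Finset ℕ → Set X := fun j T =>
    {x | (∀ i ∈ T, b j * M x ≤ h i x) ∧ ∀ i ∈ t, i ∉ T → h i x ≤ a j * M x} with hA_def
  set C : Fin p → Set (Set X) := fun j => (A j) '' {T : Finset ℕ | T ⊆ t ∧ T.Nonempty}
    with hC_def
  refine ⟨C, ?_, ?_, ?_, ?_⟩
  · -- finiteness
    intro j
    apply Set.Finite.image
    apply Set.Finite.subset t.powerset.finite_toSet
    intro T hT
    simpa [Finset.mem_powerset] using hT.1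
  · -- closed and small
    rintro j s ⟨T, ⟨hTt, ⟨i0, hi0⟩⟩, rfl⟩
    constructor
    · have : A j T = (⋂ i ∈ T, {x | b j * M x ≤ h i x}) ∩
          ⋂ i ∈ t, ⋂ (_ : i ∉ T), {x | h i x ≤ a j * M x} := by
        ext x
        simp only [hA_def, Set.mem_setOf_eq, Set.mem_inter_iff, Set.mem_iInter]
      rw [this]
      apply IsClosed.inter
      · exact isClosed_biInter fun i _ => isClosed_le (continuous_const.mul hMcont) (hcont i)
      · exact isClosed_biInter fun i _ =>
          isClosed_iInter fun _ => isClosed_le (hcont i) (continuous_const.mul hMcont)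
    · have hsub : A j T ⊆ Metric.ball (u i0) (ε / 4) := by
        intro x hx
        have h1 : b j * M x ≤ h i0 x := hx.1 i0 hi0
        have h2 : 0 < b j * M x := mul_pos (lt_trans (hapos j) (hab j)) (hMpos x)
        exact hVsub i0 (hmem i0 x (lt_of_lt_of_le h2 h1))
      calc Metric.diam (A j T) ≤ Metric.diam (Metric.ball (u i0) (ε / 4)) :=
            Metric.diam_mono hsub Metric.isBounded_ball
        _ ≤ 2 * (ε / 4) := Metric.diam_ball (by linarith)
        _ ≤ ε := by linarith
  · -- pairwise disjoint
    intro j s hs s' hs' hne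
    obtain ⟨T, ⟨hTt, -⟩, rfl⟩ := hs
    obtain ⟨T', ⟨hT't, -⟩, rfl⟩ := hs'
    have hTT' : T ≠ T' := fun e => hne (by rw [e])
    have key : ∀ (T₁ T₂ : Finset ℕ), T₁ ⊆ t → ∀ i, i ∈ T₁ → i ∉ T₂ →
        Disjoint (A j T₁) (A j T₂) := by
      intro T₁ T₂ hT₁t i hi₁ hi₂
      rw [Set.disjoint_left]
      intro x hx hx'
      have h1 : b j * M x ≤ h i x := hx.1 i hi₁
      have h2 : h i x ≤ a j * M x := hx'.2 i (hT₁t hi₁) hi₂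
      have h3 : a j * M x < b j * M x := mul_lt_mul_of_pos_right (hab j) (hMpos x)
      linarith
    by_cases hsub : T ⊆ T'
    · obtain ⟨i, hiT', hiT⟩ :=
        Finset.not_subset.mp (fun hsub' => hTT' (Finset.Subset.antisymm hsub hsub'))
      exact (key T' T hT't i hiT' hiT).symm
    · obtain ⟨i, hiT, hiT'⟩ := Finset.not_subset.mp hsub
      exact key T T' hTt i hiT hiT'
  · -- multiplicity
    intro x
    obtain ⟨imax, himt, hMeq0⟩ := Finset.exists_mem_eq_sup' htne (fun i => h i x)
    have hMeq : M x = h imax x := hMeq0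
    have himV : x ∈ V imax := hmem imax x (hMeq ▸ hMpos x)
    -- the "positive" index set
    set P : Finset ℕ := t.filter (fun i => x ∈ V i) with hP_def
    have himP : imax ∈ P := Finset.mem_filter.mpr ⟨himt, himV⟩
    have hPcard : P.card ≤ m + 1 := by
      calc P.card = (↑P : Set ℕ).ncard := (Set.ncard_coe_finset P).symm
        _ ≤ ({i | x ∈ V i} : Set ℕ).ncard := by
            apply Set.ncard_le_ncard _ (hVord x).1
            intro i hi
            exact (Finset.mem_filter.mp hi).2
        _ ≤ m + 1 := (hVord x).2
    set D : Finset ℕ := t.filter (fun i => 0 < h i x ∧ h i x < M x) with hD_def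
    have hDsub : D ⊆ P.erase imax := by
      intro i hi
      obtain ⟨hit, hpos', hlt⟩ := Finset.mem_filter.mp hi
      refine Finset.mem_erase.mpr ⟨?_, Finset.mem_filter.mpr ⟨hit, hmem i x hpos'⟩⟩
      intro e
      subst e
      rw [hMeq] at hlt
      exact lt_irrefl _ hlt
    have hDcard : D.card ≤ m := by
      have h1 : D.card ≤ (P.erase imax).card := Finset.card_le_card hDsub
      rw [Finset.card_erase_of_mem himP] at h1
      omega
    -- bad and good indices
    set BadP : Fin p → Prop := fun j => ∃ i ∈ t, a j * M x < h i x ∧ h i x < b j * M x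
      with hBadP_def
    set BadF : Finset (Fin p) := Finset.univ.filter BadP with hBadF_def
    set w : Fin p → ℕ := fun j => if hj : BadP j then hj.choose else 0 with hw_def
    have hwspec : ∀ j ∈ BadF, w j ∈ t ∧ a j * M x < h (w j) x ∧ h (w j) x < b j * M x := by
      intro j hj
      have hj' : BadP j := (Finset.mem_filter.mp hj).2
      have := hj'.choose_spec
      simp only [hw_def, dif_pos hj']
      exact ⟨this.1, this.2⟩
    have hBadD : ∀ j ∈ BadF, w j ∈ D := by
      intro j hj
      obtain ⟨hwt, hw1, hw2⟩ := hwspec j hj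
      refine Finset.mem_filter.mpr ⟨hwt, ?_, ?_⟩
      · exact lt_trans (mul_pos (hapos j) (hMpos x)) hw1
      · calc h (w j) x < b j * M x := hw2
          _ < 1 * M x := mul_lt_mul_of_pos_right (hblt1 j) (hMpos x)
          _ = M x := one_mul _
    have hwinj : Set.InjOn w ↑BadF := by
      intro j hj j' hj' he
      obtain ⟨-, hw1, hw2⟩ := hwspec j (by simpa using hj)
      obtain ⟨-, hw1', hw2'⟩ := hwspec j' (by simpa using hj')
      rw [he] at hw1 hw2
      by_contra hne
      have hvne : (j : ℕ) ≠ (j' : ℕ) := fun e => hne (Fin.val_injective e)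
      rcases lt_or_gt_of_ne hvne with hlt | hgt
      · have : b j * M x ≤ a j' * M x :=
          mul_le_mul_of_nonneg_right (hba j j' hlt) (le_of_lt (hMpos x))
        linarith
      · have : b j' * M x ≤ a j * M x :=
          mul_le_mul_of_nonneg_right (hba j' j hgt) (le_of_lt (hMpos x))
        linarith
    have hBadcard : BadF.card ≤ m := by
      calc BadF.card = (BadF.image w).card := (Finset.card_image_of_injOn hwinj).symm
        _ ≤ D.card := Finset.card_le_card (by
            intro i hi
            obtain ⟨j, hj, rfl⟩ := Finset.mem_image.mp hi
            exact hBadD j hj)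
        _ ≤ m := hDcard
    set GoodF : Finset (Fin p) := Finset.univ.filter (fun j => ¬ BadP j) with hGoodF_def
    have hGoodcard : k + 1 ≤ GoodF.card := by
      have hsum : BadF.card + GoodF.card = p := by
        rw [hBadF_def, hGoodF_def]
        rw [Finset.card_filter_add_card_filter_not (p := BadP)]
        simp [hp_def]
      omega
    -- for good j, x lies in a piece of C j
    have hGoodmem : ∀ j ∈ GoodF,
        (j, A j (t.filter (fun i => b j * M x ≤ h i x))) ∈
          {q : Fin p × Set X | q.2 ∈ C q.1 ∧ x ∈ q.2} := by
      intro j hj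
      have hnb : ¬ BadP j := (Finset.mem_filter.mp hj).2
      set Tx : Finset ℕ := t.filter (fun i => b j * M x ≤ h i x) with hTx_def
      have hTxt : Tx ⊆ t := Finset.filter_subset _ _
      have himTx : imax ∈ Tx := by
        refine Finset.mem_filter.mpr ⟨himt, ?_⟩
        calc b j * M x ≤ 1 * M x :=
              mul_le_mul_of_nonneg_right (le_of_lt (hblt1 j)) (le_of_lt (hMpos x))
          _ = M x := one_mul _
          _ = h imax x := hMeq
      have hxA : x ∈ A j Tx := by
        constructor
        · intro i hi
          exact (Finset.mem_filter.mp hi).2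
        · intro i hit hiTx
          have h1 : ¬ (b j * M x ≤ h i x) := fun hc =>
            hiTx (Finset.mem_filter.mpr ⟨hit, hc⟩)
          by_contra h2
          push_neg at h1 h2
          exact hnb ⟨i, hit, h2, h1⟩
      exact ⟨⟨Tx, ⟨hTxt, ⟨imax, himTx⟩⟩, rfl⟩, hxA⟩
    have hSfin : ({q : Fin p × Set X | q.2 ∈ C q.1 ∧ x ∈ q.2}).Finite := by
      have hCfin : ∀ j, (C j).Finite := by
        intro j
        apply Set.Finite.image
        apply Set.Finite.subset t.powerset.finite_toSet
        intro T hT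
        simpa [Finset.mem_powerset] using hT.1
      apply Set.Finite.subset
        (Set.Finite.biUnion (Set.finite_univ (α := Fin p))
          (fun j _ => (hCfin j).image (Prod.mk j)))
      rintro ⟨j, s⟩ ⟨hs, -⟩
      exact Set.mem_biUnion (Set.mem_univ j) ⟨s, hs, rfl⟩
    have := aux_card_le_ncard GoodF
      (fun j => (j, A j (t.filter (fun i => b j * M x ≤ h i x)))) _
      (fun j _ j' _ e => congrArg Prod.fst e) hGoodmem hSfin
    omega
end

section
/- Let $X$ be a compact metric space such that for every $\epsilon > 0$ and every integer $k \ge 0$ there exist families $\mathcal{C}_1, \ldots, \mathcal{C}_{n+k}$ of pairwise disjoint closed subsets of $X$, each set of diameter at most $\epsilon$, such that every point of $X$ is covered by at least $k+1$ elements of $\bigcup_{j=1}^{n+k} \mathcal{C}_j$. Then $\dim(X) < n$. -/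
/-!
Given an open cover with Lebesgue number `δ`, take closed families of mesh `δ / 2` and thicken
every piece by one radius `r < δ / 2`, small enough that the thickenings within each family stay
disjoint (the families are finite and their pieces compact). A thickened piece lies in a ball of
radius `δ`, hence in a member of the cover; sending each piece to such a member gives an open
shrinking, and a point lies in at most one thickened piece per family, so its order is at most
the number of families.
-/

open Metric Set Filter Topology

theorem Set.Finite.eventually_pairwise_disjoint_thickening {X : Type*} [EMetricSpace X]
    {S : Set (Set X)} (hS : S.Finite) (hd : S.Pairwise Disjoint) (hc : ∀ s ∈ S, IsCompact s) :
    ∀ᶠ r in 𝓝[>] (0 : ℝ), S.Pairwise fun s t => Disjoint (thickening r s) (thickening r t) := by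
  have key : ∀ s ∈ S, ∀ t ∈ S, s ≠ t →
      ∀ᶠ r in 𝓝[>] (0 : ℝ), Disjoint (thickening r s) (thickening r t) := by
    intro s hs t ht hst
    obtain ⟨δ, hδ, hdisj⟩ := (hd hs ht hst).exists_thickenings (hc s hs) (hc t ht).isClosed
    filter_upwards [Ioo_mem_nhdsGT hδ] with r hr
    exact hdisj.mono (thickening_mono hr.2.le _) (thickening_mono hr.2.le _)
  simpa [Set.Pairwise, hS.eventually_all, eventually_imp_distrib_left] using key

theorem exists_shrinking_of_pairwise_disjoint_families {Z ι κ : Type*} [TopologicalSpace Z]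
    [Finite κ] {U : ι → Set Z} (W : κ → Set (Set Z))
    (hWo : ∀ j, ∀ s ∈ W j, IsOpen s) (hWd : ∀ j, (W j).Pairwise Disjoint)
    (hWU : ∀ j, ∀ s ∈ W j, s.Nonempty → ∃ i, s ⊆ U i) (hW : ∀ z, ∃ j, ∃ s ∈ W j, z ∈ s) :
    ∃ V : ι → Set Z, (∀ i, IsOpen (V i)) ∧ (∀ i, V i ⊆ U i) ∧ (⋃ i, V i) = univ ∧
      ∀ z, {i | z ∈ V i}.Finite ∧ {i | z ∈ V i}.ncard ≤ Nat.card κ := by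
  rcases isEmpty_or_nonempty ι with hι | _
  · have : IsEmpty Z := ⟨fun z => by
      obtain ⟨j, s, hs, hzs⟩ := hW z
      exact isEmptyElim (hWU j s hs ⟨z, hzs⟩).choose⟩
    exact ⟨U, isEmptyElim, isEmptyElim, Subsingleton.elim _ _, isEmptyElim⟩
  choose! f hf using hWU
  set V : ι → Set Z := fun i => ⋃ p ∈ {p : κ × Set Z | p.2 ∈ W p.1 ∧ f p.1 p.2 = i}, p.2
  have mem_V : ∀ z i, z ∈ V i ↔ ∃ j, ∃ s ∈ W j, f j s = i ∧ z ∈ s := by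
    intro z i
    simp [V, and_assoc]
  refine ⟨V, fun i => isOpen_biUnion fun p hp => hWo _ _ hp.1, ?_, ?_, fun z => ?_⟩
  · rintro i z hz
    obtain ⟨j, s, hs, rfl, hzs⟩ := (mem_V z i).1 hz
    exact hf j s hs ⟨z, hzs⟩ hzs
  · refine eq_univ_of_forall fun z => ?_
    obtain ⟨j, s, hs, hzs⟩ := hW z
    exact mem_iUnion.2 ⟨f j s, (mem_V z _).2 ⟨j, s, hs, rfl, hzs⟩⟩
  set T := {p : κ × Set Z | p.2 ∈ W p.1 ∧ z ∈ p.2}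
  have hT : {i | z ∈ V i} = (fun p => f p.1 p.2) '' T := by
    ext i
    simp only [mem_ofPred_eq, mem_V, mem_image, Prod.exists, T]
    grind
  have hinj : InjOn Prod.fst T := by
    rintro ⟨j, s⟩ ⟨hs, hzs⟩ ⟨j', t⟩ ⟨ht, hzt⟩ (rfl : j = j')
    exact congrArg _ (PairwiseDisjoint.elim_set (f := id) (hWd j) hs ht z hzs hzt)
  have hTfin : T.Finite := Finite.of_finite_image (toFinite _) hinj
  rw [hT]
  refine ⟨hTfin.image _, (ncard_image_le hTfin).trans ?_⟩
  rw [← hinj.ncard_image]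
  exact ncard_le_card _

theorem Metric.thickening_subset_ball_of_diam_le {X : Type*} [PseudoMetricSpace X] {s : Set X}
    (hs : Bornology.IsBounded s) {x : X} (hx : x ∈ s) (r : ℝ) {ε : ℝ} (hε : diam s ≤ ε) :
    thickening r s ⊆ ball x (r + ε) := by
  have hε₀ : 0 ≤ ε := diam_nonneg.trans hε
  calc thickening r s ⊆ thickening r (cthickening ε {x}) := by
        refine thickening_subset_of_subset r fun y hy => ?_
        rw [cthickening_singleton x hε₀]
        exact mem_closedBall.2 ((dist_le_diam_of_mem hs hy hx).trans hε)
    _ ⊆ thickening (r + ε) {x} := thickening_cthickening_subset r hε₀ _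
    _ = ball x (r + ε) := thickening_singleton _ _

theorem covDimLE_of_forall_pairwise_disjoint_closed_cover {X : Type*} [MetricSpace X]
    [CompactSpace X] (n : ℕ)
    (h : ∀ ε > 0, ∃ C : Fin (n + 1) → Set (Set X),
      (∀ j, (C j).Finite) ∧ (∀ j, ∀ s ∈ C j, IsClosed s ∧ diam s ≤ ε) ∧
      (∀ j, (C j).Pairwise Disjoint) ∧ ∀ x, ∃ j, ∃ s ∈ C j, x ∈ s) :
    covDimLE X n := by
  intro ι U hUo hU
  obtain ⟨δ, hδ, hleb⟩ := lebesgue_number_lemma_of_metric isCompact_univ hUo hU.ge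
  obtain ⟨C, hfin, hcl, hdisj, hcov⟩ := h (δ / 2) (half_pos hδ)
  have hev : ∀ᶠ r in 𝓝[>] (0 : ℝ),
      (∀ j, (C j).Pairwise fun s t => Disjoint (thickening r s) (thickening r t)) ∧
        r ∈ Ioo 0 (δ / 2) :=
    (eventually_all.2 fun j => (hfin j).eventually_pairwise_disjoint_thickening (hdisj j)
      fun s hs => (hcl j s hs).1.isCompact).and (Ioo_mem_nhdsGT (half_pos hδ))
  obtain ⟨r, hrdisj, hr, hrδ⟩ := hev.exists
  have hsub : ∀ j, ∀ s ∈ thickening r '' C j, s.Nonempty → ∃ i, s ⊆ U i := by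
    rintro j _ ⟨t, ht, rfl⟩ htne
    obtain ⟨x, hx⟩ := (thickening_nonempty_iff.1 htne).2
    obtain ⟨i, hi⟩ := hleb x (mem_univ x)
    have hball := thickening_subset_ball_of_diam_le isBounded_of_compactSpace hx r (hcl j t ht).2
    exact ⟨i, hball.trans ((ball_subset_ball (by linarith)).trans hi)⟩
  have hcovW : ∀ x, ∃ j, ∃ s ∈ thickening r '' C j, x ∈ s := fun x => by
    obtain ⟨j, s, hs, hxs⟩ := hcov x
    exact ⟨j, _, mem_image_of_mem _ hs, self_subset_thickening hr _ hxs⟩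
  obtain ⟨V, hVo, hVU, hV, hVord⟩ := exists_shrinking_of_pairwise_disjoint_families
    (fun j => thickening r '' C j) (fun j => forall_mem_image.2 fun _ _ => isOpen_thickening)
    (fun j => (hrdisj j).image) hsub hcovW
  exact ⟨V, hVo, hVU, hV, fun z => by simpa using hVord z⟩

theorem stmt16 {X : Type*} [MetricSpace X] [CompactSpace X] (n : ℕ)
    (h : ∀ ε : ℝ, 0 < ε → ∀ k : ℕ,
      ∃ C : Fin (n + k) → Set (Set X),
        (∀ j, (C j).Finite) ∧
        (∀ j, ∀ s ∈ C j, IsClosed s ∧ Metric.diam s ≤ ε) ∧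
        (∀ j, (C j).Pairwise Disjoint) ∧
        ∀ x : X, k + 1 ≤ {p : Fin (n + k) × Set X | p.2 ∈ C p.1 ∧ x ∈ p.2}.ncard) :
    covDimLT X n := by
  have hcover : ∀ ε > 0, ∃ C : Fin n → Set (Set X),
      (∀ j, (C j).Finite) ∧ (∀ j, ∀ s ∈ C j, IsClosed s ∧ diam s ≤ ε) ∧
      (∀ j, (C j).Pairwise Disjoint) ∧ ∀ x, ∃ j, ∃ s ∈ C j, x ∈ s := fun ε hε => by
    obtain ⟨C, hfin, hcl, hdisj, hcov⟩ := h ε hε 0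
    refine ⟨C, hfin, hcl, hdisj, fun x => ?_⟩
    obtain ⟨⟨j, s⟩, hs, hxs⟩ := nonempty_of_ncard_ne_zero (Nat.one_le_iff_ne_zero.1 (hcov x))
    exact ⟨j, s, hs, hxs⟩
  rcases isEmpty_or_nonempty X with hX | ⟨⟨x⟩⟩
  · exact Or.inl hX
  cases n with
  | zero =>
    obtain ⟨C, -, -, -, hC⟩ := hcover 1 one_pos
    exact (hC x).choose.elim0
  | succ m =>
    exact Or.inr ⟨m, covDimLE_of_forall_pairwise_disjoint_closed_cover m hcover, by simp⟩
end
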